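/- Let X be a Banach space and let U be a weakly exponentially unstable evolution operator on X, with constants N ≥ 1 and ν > 0. Define L(t,s,x) = −∫_s^t ‖U(τ,s)x‖² dτ for (t,s) ∈ T and x ∈ X. Then L is a nonpositive Lyapunov function for U, and with m = N²/(2ν) > 0, for each x₀ ∈ X there is t₀ ≥ 0 such that |L(t,t₀,x₀)| ≤ m‖U(t,t₀)x₀‖² for all t ≥ t₀. -/

import Mathlib

/-!
Weak exponential instability makes the orbit grow at rate `ν` after `t₀`, so looking backwards
from time `t` one has `‖U(τ,t₀)x₀‖ ≤ N e^{-ν(t-τ)} ‖U(t,t₀)x₀‖` for `t₀ ≤ τ ≤ t`. Squaring and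
integrating over `[t₀, t]` bounds `|L(t,t₀,x₀)| = ∫_{t₀}^t ‖U(τ,t₀)x₀‖² dτ` by
`N² ‖U(t,t₀)x₀‖² ∫_{-∞}^t e^{-2ν(t-τ)} dτ = N²/(2ν) ‖U(t,t₀)x₀‖²`. The Lyapunov equation is
additivity of the integral over adjacent intervals.
-/

/-- An evolution operator on a Banach space `X`. -/
structure EvolutionOperator (X : Type*) [NormedAddCommGroup X] [NormedSpace ℝ X] where
  U : ℝ → ℝ → X →L[ℝ] X
  isId : ∀ t : ℝ, 0 ≤ t → U t t = ContinuousLinearMap.id ℝ X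
  cocycle : ∀ t s t₀ : ℝ, 0 ≤ t₀ → t₀ ≤ s → s ≤ t → ∀ x : X, U t s (U s t₀ x) = U t t₀ x
  cont : ∀ x : X, ContinuousOn (fun p : ℝ × ℝ => U p.1 p.2 x)
    {p : ℝ × ℝ | 0 ≤ p.2 ∧ p.2 ≤ p.1}

open Real Set MeasureTheory intervalIntegral

namespace EvolutionOperator

variable {X : Type*} [NormedAddCommGroup X] [NormedSpace ℝ X] (E : EvolutionOperator X)

theorem continuousOn_orbit (x : X) {s : ℝ} (hs : 0 ≤ s) :
    ContinuousOn (fun τ => E.U τ s x) (Ici s) :=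
  (E.cont x).comp (continuous_id.prodMk continuous_const).continuousOn fun _ hτ => ⟨hs, hτ⟩

theorem intervalIntegrable_norm_orbit_sq (x : X) {s a b : ℝ} (hs : 0 ≤ s) (ha : s ≤ a)
    (hb : s ≤ b) : IntervalIntegrable (fun τ => ‖E.U τ s x‖ ^ 2) volume a b :=
  (((E.continuousOn_orbit x hs).norm.pow 2).mono
    fun _ hτ => (le_min ha hb).trans hτ.1).intervalIntegrable

end EvolutionOperator

theorem integral_exp_mul_sub_le {c : ℝ} (hc : 0 < c) (a b : ℝ) :
    ∫ τ in a..b, exp (c * (τ - b)) ≤ 1 / c := by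
  simp_rw [mul_sub]
  rw [integral_comp_mul_sub (f := exp) hc.ne', integral_exp, sub_self, exp_zero, smul_eq_mul,
    one_div]
  exact mul_le_of_le_one_right (inv_nonneg.2 hc.le) (sub_le_self _ (exp_pos _).le)

theorem integral_sq_le_of_exp_growth {f : ℝ → ℝ} {N ν a b : ℝ} (hν : 0 < ν) (hab : a ≤ b)
    (hf : IntervalIntegrable (fun τ => f τ ^ 2) volume a b) (hf0 : ∀ τ ∈ Icc a b, 0 ≤ f τ)
    (hgrowth : ∀ τ ∈ Icc a b, exp (ν * (b - τ)) * f τ ≤ N * f b) :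
    ∫ τ in a..b, f τ ^ 2 ≤ N ^ 2 / (2 * ν) * f b ^ 2 := by
  have hpointwise : ∀ τ ∈ Icc a b, f τ ^ 2 ≤ (N * f b) ^ 2 * exp (2 * ν * (τ - b)) := by
    intro τ hτ
    calc f τ ^ 2 = (exp (ν * (b - τ)) * f τ) ^ 2 * exp (2 * ν * (τ - b)) := by
          rw [mul_pow, ← exp_nat_mul, mul_right_comm, ← exp_add]
          ring_nf
          rw [exp_zero, mul_one]
      _ ≤ (N * f b) ^ 2 * exp (2 * ν * (τ - b)) := by
          have h0 : 0 ≤ exp (ν * (b - τ)) * f τ := mul_nonneg (exp_pos _).le (hf0 τ hτ)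
          exact mul_le_mul_of_nonneg_right (pow_le_pow_left₀ h0 (hgrowth τ hτ) 2) (exp_pos _).le
  calc ∫ τ in a..b, f τ ^ 2
      ≤ ∫ τ in a..b, (N * f b) ^ 2 * exp (2 * ν * (τ - b)) :=
        integral_mono_on hab hf ((by fun_prop : Continuous _).intervalIntegrable a b) hpointwise
    _ ≤ (N * f b) ^ 2 * (1 / (2 * ν)) := by
        rw [intervalIntegral.integral_const_mul]
        exact mul_le_mul_of_nonneg_left (integral_exp_mul_sub_le (by positivity) a b)
          (sq_nonneg _)
    _ = N ^ 2 / (2 * ν) * f b ^ 2 := by ring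

theorem lyapunov_necessity_general
    {X : Type*} [NormedAddCommGroup X] [NormedSpace ℝ X]
    (E : EvolutionOperator X) (N ν : ℝ) (hν : 0 < ν)
    (hweak : ∀ x₀ : X, ∃ t₀ : ℝ, 0 ≤ t₀ ∧ ∀ s t : ℝ, t₀ ≤ s → s ≤ t →
      N * ‖E.U t t₀ x₀‖ ≥ Real.exp (ν * (t - s)) * ‖E.U s t₀ x₀‖)
    (L : ℝ → ℝ → X → ℝ)
    (hL : ∀ t s : ℝ, ∀ x : X, L t s x = -(∫ τ in s..t, ‖E.U τ s x‖ ^ 2)) :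
    (∀ t s : ℝ, ∀ x : X, 0 ≤ s → s ≤ t → L t s x ≤ 0) ∧
    ∀ x₀ : X, ∃ t₀ : ℝ, 0 ≤ t₀ ∧
      (∀ s t : ℝ, t₀ ≤ s → s ≤ t →
        L t t₀ x₀ + (∫ τ in s..t, ‖E.U τ t₀ x₀‖ ^ 2) = L s t₀ x₀) ∧
      (∀ t : ℝ, t₀ ≤ t → |L t t₀ x₀| ≤ (N ^ 2 / (2 * ν)) * ‖E.U t t₀ x₀‖ ^ 2) := by
  have hnonneg : ∀ {s t : ℝ} (x : X), s ≤ t → 0 ≤ ∫ τ in s..t, ‖E.U τ s x‖ ^ 2 :=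
    fun _ hst => integral_nonneg hst fun _ _ => sq_nonneg _
  refine ⟨fun t s x _ hst => by rw [hL]; exact neg_nonpos.2 (hnonneg x hst), fun x₀ => ?_⟩
  obtain ⟨t₀, ht₀, hgrowth⟩ := hweak x₀
  refine ⟨t₀, ht₀, fun s t hs hst => ?_, fun t ht => ?_⟩
  · rw [hL, hL, ← integral_add_adjacent_intervals
      (E.intervalIntegrable_norm_orbit_sq x₀ ht₀ le_rfl hs)
      (E.intervalIntegrable_norm_orbit_sq x₀ ht₀ hs (hs.trans hst))]
    ring
  · rw [hL, abs_neg, abs_of_nonneg (hnonneg x₀ ht)]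
    exact integral_sq_le_of_exp_growth hν ht
      (E.intervalIntegrable_norm_orbit_sq x₀ ht₀ le_rfl ht) (fun _ _ => norm_nonneg _)
      fun τ hτ => hgrowth τ t hτ.1 hτ.2

/-- If `U` is weakly exponentially unstable with constants `N ≥ 1`, `ν > 0`, then
`L(t,s,x) = -∫_s^t ‖U(τ,s)x‖² dτ` is a nonpositive Lyapunov function for `U` and,
with `m = N²/(2ν)`, for each `x₀` there is `t₀ ≥ 0` such that `L` solves the Lyapunov
equation and `|L(t,t₀,x₀)| ≤ m ‖U(t,t₀)x₀‖²` for all `t ≥ t₀`. -/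
theorem lyapunov_necessity
    {X : Type*} [NormedAddCommGroup X] [NormedSpace ℝ X] [CompleteSpace X]
    (E : EvolutionOperator X) (N ν : ℝ) (hN : 1 ≤ N) (hν : 0 < ν)
    (hweak : ∀ x₀ : X, ∃ t₀ : ℝ, 0 ≤ t₀ ∧ ∀ s t : ℝ, t₀ ≤ s → s ≤ t →
      N * ‖E.U t t₀ x₀‖ ≥ Real.exp (ν * (t - s)) * ‖E.U s t₀ x₀‖)
    (L : ℝ → ℝ → X → ℝ)
    (hL : ∀ t s : ℝ, ∀ x : X, L t s x = -(∫ τ in s..t, ‖E.U τ s x‖ ^ 2)) :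
    (∀ t s : ℝ, ∀ x : X, 0 ≤ s → s ≤ t → L t s x ≤ 0) ∧
    ∀ x₀ : X, ∃ t₀ : ℝ, 0 ≤ t₀ ∧
      (∀ s t : ℝ, t₀ ≤ s → s ≤ t →
        L t t₀ x₀ + (∫ τ in s..t, ‖E.U τ t₀ x₀‖ ^ 2) = L s t₀ x₀) ∧
      (∀ t : ℝ, t₀ ≤ t → |L t t₀ x₀| ≤ (N ^ 2 / (2 * ν)) * ‖E.U t t₀ x₀‖ ^ 2) :=
  lyapunov_necessity_general E N ν hν hweak L hL
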